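/- Let M ⊂ ℝ^D be a nonempty set, let ℰ be a set of maps E : M → ℝ^n with sup_{x∈M} ‖E(x)‖_∞ ≤ Λ for every E ∈ ℰ, let 𝒜 be a set of matrices A ∈ ℝ^{n×n} with spectral norm ‖A‖₂ ≤ ρ for every A ∈ 𝒜, and let 𝒟 be a set of maps D : ℝ^n → ℝ^D each satisfying ‖D(u) − D(v)‖_∞ ≤ C ‖u − v‖₂ for all u, v ∈ ℝ^n. Suppose S_E ⊆ ℰ is a δ_E-cover of ℰ in the metric (E, E′) ↦ sup_{x∈M} ‖E(x) − E′(x)‖_∞, S_A ⊆ 𝒜 is a δ_A-cover of 𝒜 in the entrywise max metric, and S_D ⊆ 𝒟 is a δ_D-cover of 𝒟 in the metric (D, D′) ↦ sup_{z∈ℝ^n} ‖D(z) − D′(z)‖_∞ (all suprema assumed finite). Then the set {x ↦ D(A E(x)) : D ∈ S_D, A ∈ S_A, E ∈ S_E} is a (δ_D + C ρ √n δ_E + C n^{3/2} Λ δ_A)-cover of the composite class {x ↦ D(A E(x)) : D ∈ 𝒟, A ∈ 𝒜, E ∈ ℰ} in the metric (G, G′) ↦ sup_{x∈M} ‖G(x)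 − G′(x)‖_∞; in particular, the covering numbers satisfy Q(δ_D + Cρ√n δ_E + C n^{3/2} Λ δ_A, composite class) ≤ |S_D| · |S_A| · |S_E|. -/

import Mathlib

/-!
Pass from `D (A E x)` to `D' (A' E' x)` through `D' (A E x)`: the first step costs the decoder
cover error `δ_D`, the second at most `C` times the ℓ² distance of the codes. That distance
splits along `A E x - A' E' x = A (E x - E' x) + (A - A') E' x`. The spectral norm bounds the
first part by `ρ √n δ_E`, since the sup-norm bound `δ_E` costs a factor `√n` in ℓ². Each
coordinate of the second part is at most `n δ_A Λ`, so its ℓ² norm is at most `n^{3/2} Λ δ_A`.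
-/

noncomputable section

/-- Euclidean (ℓ²) norm of a vector in `ℝ^d`. -/
def l2 {d : ℕ} (x : Fin d → ℝ) : ℝ := Real.sqrt (∑ i, (x i) ^ 2)

/-- Spectral norm (operator norm induced by Euclidean norms) of a square matrix. -/
def specNorm {n : ℕ} (A : Matrix (Fin n) (Fin n) ℝ) : ℝ :=
  ⨆ v : {v : Fin n → ℝ // l2 v ≤ 1}, l2 (A.mulVec v)

section

open Matrix

lemma l2_eq_norm_toLp {d : ℕ} (x : Fin d → ℝ) :
    l2 x = ‖(WithLp.toLp 2 x : EuclideanSpace ℝ (Fin d))‖ := by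
  simp [l2, EuclideanSpace.norm_eq]

lemma specNorm_eq_norm_toEuclideanCLM {n : ℕ} (A : Matrix (Fin n) (Fin n) ℝ) :
    specNorm A = ‖toEuclideanCLM (𝕜 := ℝ) A‖ := by
  rw [← ContinuousLinearMap.sSup_unitClosedBall_eq_norm, specNorm, iSup, Set.image]
  congr 1
  ext r
  constructor
  · rintro ⟨⟨v, hv⟩, rfl⟩
    exact ⟨WithLp.toLp 2 v, by simpa [← l2_eq_norm_toLp] using hv, by simp [l2_eq_norm_toLp]⟩
  · rintro ⟨x, hx, rfl⟩
    exact ⟨⟨WithLp.ofLp x, by simpa [l2_eq_norm_toLp] using hx⟩,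
      by simp [l2_eq_norm_toLp, ← ofLp_toEuclideanCLM]⟩

lemma l2_mulVec_le_specNorm_mul {n : ℕ} (A : Matrix (Fin n) (Fin n) ℝ) (v : Fin n → ℝ) :
    l2 (A *ᵥ v) ≤ specNorm A * l2 v := by
  simpa [l2_eq_norm_toLp, specNorm_eq_norm_toEuclideanCLM] using
    (toEuclideanCLM (𝕜 := ℝ) A).le_opNorm (WithLp.toLp 2 v)

lemma l2_add_le {d : ℕ} (x y : Fin d → ℝ) : l2 (x + y) ≤ l2 x + l2 y := by
  simpa [l2_eq_norm_toLp] using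
    norm_add_le (WithLp.toLp 2 x : EuclideanSpace ℝ (Fin d)) (WithLp.toLp 2 y)

lemma l2_le_sqrt_mul_of_forall_abs_le {d : ℕ} {x : Fin d → ℝ} {b : ℝ} (h : ∀ i, |x i| ≤ b) :
    l2 x ≤ √d * b := by
  rcases d.eq_zero_or_pos with rfl | hd
  · simp [l2]
  have hb : 0 ≤ b := (abs_nonneg _).trans (h ⟨0, hd⟩)
  calc l2 x ≤ √(∑ _i : Fin d, b ^ 2) :=
        Real.sqrt_le_sqrt <| Finset.sum_le_sum fun i _ =>
          sq_le_sq' (abs_le.mp (h i)).1 (abs_le.mp (h i)).2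
    _ = √d * b := by simp [Real.sqrt_mul, Real.sqrt_sq hb]

lemma abs_mulVec_apply_le {m n : Type*} [Fintype n] {A : Matrix m n ℝ} {w : n → ℝ} {a b : ℝ}
    (hA : ∀ i j, |A i j| ≤ a) (hw : ∀ j, |w j| ≤ b) (i : m) :
    |(A *ᵥ w) i| ≤ Fintype.card n * (a * b) := by
  calc |(A *ᵥ w) i| = |∑ j, A i j * w j| := rfl
    _ ≤ ∑ j, |A i j| * |w j| := by
        simpa only [abs_mul] using Finset.abs_sum_le_sum_abs (fun j => A i j * w j) _
    _ ≤ ∑ _j : n, a * b := by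
        gcongr with j
        exacts [(abs_nonneg _).trans (hA i j), hA i j, hw j]
    _ = Fintype.card n * (a * b) := by simp

lemma Real.rpow_three_halves_eq_mul_sqrt {x : ℝ} (hx : 0 ≤ x) : x ^ ((3 : ℝ) / 2) = x * √x := by
  rw [show (3 : ℝ) / 2 = 1 + 1 / 2 by norm_num, Real.rpow_add' hx (by norm_num), Real.rpow_one,
    Real.sqrt_eq_rpow]

lemma l2_mulVec_sub_mulVec_le {n : ℕ} {A A' : Matrix (Fin n) (Fin n) ℝ} {w w' : Fin n → ℝ}
    {ρ Λ δA δE : ℝ} (hρ : 0 ≤ ρ) (hA : specNorm A ≤ ρ) (hAA' : ∀ i j, |A i j - A' i j| ≤ δA)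
    (hw' : ‖w'‖ ≤ Λ) (hww' : ‖w - w'‖ ≤ δE) :
    l2 (A *ᵥ w - A' *ᵥ w') ≤ ρ * √n * δE + (n : ℝ) ^ ((3 : ℝ) / 2) * Λ * δA := by
  have hsplit : A *ᵥ w - A' *ᵥ w' = A *ᵥ (w - w') + (A - A') *ᵥ w' := by
    rw [mulVec_sub, sub_mulVec]
    abel
  have hw : l2 (w - w') ≤ √n * δE :=
    l2_le_sqrt_mul_of_forall_abs_le fun i => (norm_le_pi_norm (w - w') i).trans hww'
  have hdiff : l2 ((A - A') *ᵥ w') ≤ √n * (n * (δA * Λ)) :=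
    l2_le_sqrt_mul_of_forall_abs_le fun i => by
      simpa using abs_mulVec_apply_le (A := A - A') hAA'
        (fun j => (norm_le_pi_norm w' j).trans hw') i
  calc l2 (A *ᵥ w - A' *ᵥ w') ≤ l2 (A *ᵥ (w - w')) + l2 ((A - A') *ᵥ w') :=
        hsplit ▸ l2_add_le _ _
    _ ≤ ρ * (√n * δE) + √n * (n * (δA * Λ)) :=
        add_le_add ((l2_mulVec_le_specNorm_mul A _).trans
          (mul_le_mul hA hw (Real.sqrt_nonneg _) hρ)) hdiff
    _ = _ := by
        rw [Real.rpow_three_halves_eq_mul_sqrt n.cast_nonneg]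
        ring

end

theorem stmt7_general {D n : ℕ} (M : Set (Fin D → ℝ))
    (ℰ : Set ((Fin D → ℝ) → (Fin n → ℝ)))
    (𝒜 : Set (Matrix (Fin n) (Fin n) ℝ))
    (𝒟 : Set ((Fin n → ℝ) → (Fin D → ℝ)))
    (Λ ρ C : ℝ) (hρ : 0 ≤ ρ) (hC : 0 ≤ C)
    (hℰ : ∀ E ∈ ℰ, ∀ x ∈ M, ‖E x‖ ≤ Λ)
    (h𝒜 : ∀ A ∈ 𝒜, specNorm A ≤ ρ)
    (h𝒟 : ∀ Dm ∈ 𝒟, ∀ u v : Fin n → ℝ, ‖Dm u - Dm v‖ ≤ C * l2 (u - v))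
    (SE : Set ((Fin D → ℝ) → (Fin n → ℝ)))
    (SA : Set (Matrix (Fin n) (Fin n) ℝ))
    (SD : Set ((Fin n → ℝ) → (Fin D → ℝ)))
    (δE δA δD : ℝ)
    (hSE : SE ⊆ ℰ) (hSD : SD ⊆ 𝒟)
    (hSEcov : ∀ E ∈ ℰ, ∃ E' ∈ SE, ∀ x ∈ M, ‖E x - E' x‖ ≤ δE)
    (hSAcov : ∀ A ∈ 𝒜, ∃ A' ∈ SA, ∀ i j, |A i j - A' i j| ≤ δA)
    (hSDcov : ∀ Dm ∈ 𝒟, ∃ D' ∈ SD, ∀ z : Fin n → ℝ, ‖Dm z - D' z‖ ≤ δD) :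
    ∀ Dm ∈ 𝒟, ∀ A ∈ 𝒜, ∀ E ∈ ℰ,
      ∃ D' ∈ SD, ∃ A' ∈ SA, ∃ E' ∈ SE,
        ∀ x ∈ M, ‖Dm (A.mulVec (E x)) - D' (A'.mulVec (E' x))‖
          ≤ δD + C * ρ * Real.sqrt n * δE + C * (n : ℝ) ^ ((3 : ℝ) / 2) * Λ * δA := by
  intro Dm hDm A hA E hE
  obtain ⟨D', hD'S, hD'⟩ := hSDcov Dm hDm
  obtain ⟨A', hA'S, hA'⟩ := hSAcov A hA
  obtain ⟨E', hE'S, hE'⟩ := hSEcov E hE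
  refine ⟨D', hD'S, A', hA'S, E', hE'S, fun x hx => ?_⟩
  have hcode := l2_mulVec_sub_mulVec_le hρ (h𝒜 A hA) hA' (hℰ E' (hSE hE'S) x hx) (hE' x hx)
  set u := A.mulVec (E x)
  set u' := A'.mulVec (E' x)
  calc ‖Dm u - D' u'‖ ≤ ‖Dm u - D' u‖ + ‖D' u - D' u'‖ := norm_sub_le_norm_sub_add_norm_sub _ _ _
    _ ≤ δD + C * (ρ * √n * δE + (n : ℝ) ^ ((3 : ℝ) / 2) * Λ * δA) :=
        add_le_add (hD' u) ((h𝒟 D' (hSD hD'S) u u').trans (mul_le_mul_of_nonneg_left hcode hC))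
    _ = _ := by ring

/-- covers of the encoder class, the matrix class and the decoder class
combine to a cover of the composite class `{x ↦ D(A E(x))}`: for every composite built
from `𝒟 × 𝒜 × ℰ` there is a composite built from the covers `S_D × S_A × S_E` within
uniform (sup over `M`, entrywise `‖·‖_∞`) distance `δ_D + Cρ√n δ_E + C n^{3/2} Λ δ_A`.
(`‖·‖` on `Fin d → ℝ` is the sup norm.) -/
theorem stmt7 {D n : ℕ} (M : Set (Fin D → ℝ))
    (ℰ : Set ((Fin D → ℝ) → (Fin n → ℝ)))
    (𝒜 : Set (Matrix (Fin n) (Fin n) ℝ))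
    (𝒟 : Set ((Fin n → ℝ) → (Fin D → ℝ)))
    (Λ ρ C : ℝ) (hΛ : 0 ≤ Λ) (hρ : 0 ≤ ρ) (hC : 0 ≤ C)
    (hℰ : ∀ E ∈ ℰ, ∀ x ∈ M, ‖E x‖ ≤ Λ)
    (h𝒜 : ∀ A ∈ 𝒜, specNorm A ≤ ρ)
    (h𝒟 : ∀ Dm ∈ 𝒟, ∀ u v : Fin n → ℝ, ‖Dm u - Dm v‖ ≤ C * l2 (u - v))
    (SE : Set ((Fin D → ℝ) → (Fin n → ℝ)))
    (SA : Set (Matrix (Fin n) (Fin n) ℝ))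
    (SD : Set ((Fin n → ℝ) → (Fin D → ℝ)))
    (δE δA δD : ℝ)
    (hSE : SE ⊆ ℰ) (hSA : SA ⊆ 𝒜) (hSD : SD ⊆ 𝒟)
    (hSEcov : ∀ E ∈ ℰ, ∃ E' ∈ SE, ∀ x ∈ M, ‖E x - E' x‖ ≤ δE)
    (hSAcov : ∀ A ∈ 𝒜, ∃ A' ∈ SA, ∀ i j, |A i j - A' i j| ≤ δA)
    (hSDcov : ∀ Dm ∈ 𝒟, ∃ D' ∈ SD, ∀ z : Fin n → ℝ, ‖Dm z - D' z‖ ≤ δD) :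
    ∀ Dm ∈ 𝒟, ∀ A ∈ 𝒜, ∀ E ∈ ℰ,
      ∃ D' ∈ SD, ∃ A' ∈ SA, ∃ E' ∈ SE,
        ∀ x ∈ M, ‖Dm (A.mulVec (E x)) - D' (A'.mulVec (E' x))‖
          ≤ δD + C * ρ * Real.sqrt n * δE + C * (n : ℝ) ^ ((3 : ℝ) / 2) * Λ * δA :=
  stmt7_general M ℰ 𝒜 𝒟 Λ ρ C hρ hC hℰ h𝒜 h𝒟 SE SA SD δE δA δD hSE hSD hSEcov hSAcov hSDcov

end
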